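/- arXiv:2311.15873 — 6 statements merged into one kernel-verified Lean document; each statement's English description precedes it below -/
import Mathlib

section
/- Let H ⊕ L be a direct sum of two finite-dimensional complex inner product spaces and S a unitary on H ⊕ L. Then for every ξ ∈ H there exist τ ∈ H and v ∈ L such that S(ξ ⊕ v) = τ ⊕ v. -/
/-!
Write `P` for the orthogonal projection onto `L = Hᗮ`. It suffices to find `v ∈ L` with
`v - P S v = P S ξ`, for then `τ = S (ξ + v) - v` satisfies `P τ = 0`; this says
`P S ξ ∈ range (1 - B)` for the compression `B = P S P`. Since `B` is a contraction, every
vector orthogonal to `range (1 - B)` is fixed by `B`, so in finite dimension it suffices that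
`P S ξ` is orthogonal to the fixed points of `B`. Such a fixed point `w` lies in `L` and,
`S` being an isometry, is fixed by `S` itself; hence `⟪w, P S ξ⟫ = ⟪S w, S ξ⟫ = ⟪w, ξ⟫ = 0`.
-/

open Submodule
open scoped InnerProductSpace

section Contraction

variable {𝕜 E : Type*} [RCLike 𝕜] [NormedAddCommGroup E] [InnerProductSpace 𝕜 E]

namespace LinearMap

theorem apply_eq_self_of_mem_orthogonal_range_one_sub {f : E →ₗ[𝕜] E}
    (hf : ∀ x, ‖f x‖ ≤ ‖x‖) {w : E} (hw : w ∈ (range (1 - f))ᗮ) : f w = w := by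
  refine eq_of_norm_le_re_inner_eq_norm_sq (𝕜 := 𝕜) (hf w) ?_
  have hw' : ⟪w - f w, w⟫_𝕜 = 0 := (mem_orthogonal _ _).1 hw _ ⟨w, rfl⟩
  rw [inner_sub_left, sub_eq_zero] at hw'
  rw [← hw', inner_self_eq_norm_sq]

theorem mem_range_one_sub_of_forall_fixed_inner_eq_zero [FiniteDimensional 𝕜 E]
    {f : E →ₗ[𝕜] E} (hf : ∀ x, ‖f x‖ ≤ ‖x‖) {y : E} (hy : ∀ w, f w = w → ⟪w, y⟫_𝕜 = 0) :
    y ∈ range (1 - f) := by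
  rw [← (range (1 - f)).orthogonal_orthogonal]
  exact fun w hw ↦ hy w (apply_eq_self_of_mem_orthogonal_range_one_sub hf hw)

end LinearMap

namespace LinearIsometry

variable (S : E →ₗᵢ[𝕜] E) (K : Submodule 𝕜 E) [K.HasOrthogonalProjection]

noncomputable def compress : E →ₗ[𝕜] E :=
  K.starProjection.toLinearMap ∘ₗ S.toLinearMap ∘ₗ K.starProjection.toLinearMap

theorem compress_apply (x : E) : S.compress K x = K.starProjection (S (K.starProjection x)) :=
  rfl

theorem compress_apply_mem (x : E) : S.compress K x ∈ K :=
  K.starProjection_apply_mem _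

theorem norm_compress_apply_le (x : E) : ‖S.compress K x‖ ≤ ‖x‖ :=
  calc ‖S.compress K x‖ ≤ ‖S (K.starProjection x)‖ := K.norm_starProjection_apply_le _
    _ = ‖K.starProjection x‖ := S.norm_map _
    _ ≤ ‖x‖ := K.norm_starProjection_apply_le _

theorem apply_eq_self_of_compress_apply_eq {w : E} (hw : S.compress K w = w) : S w = w := by
  have hPw : K.starProjection w = w :=
    K.starProjection_eq_self_iff.2 (hw ▸ S.compress_apply_mem K w)
  rw [compress_apply, hPw] at hw
  have hSw : S w ∈ K := by
    rw [K.mem_iff_norm_starProjection, hw, S.norm_map]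
  rwa [K.starProjection_eq_self_iff.2 hSw] at hw

end LinearIsometry

end Contraction

/-- **Transduction (existence).** Let `W = H ⊕ Hᗮ` be a finite-dimensional complex inner
product space decomposed into a public space `H` and private space `L = Hᗮ`, and let `S`
be a unitary on `W`. Then for every `ξ ∈ H` there exist `τ ∈ H` and `v ∈ L` such that
`S (ξ ⊕ v) = τ ⊕ v`. -/
theorem transduction_exists
    {W : Type*} [NormedAddCommGroup W] [InnerProductSpace ℂ W] [FiniteDimensional ℂ W]
    (H : Submodule ℂ W) (S : W ≃ₗᵢ[ℂ] W) :
    ∀ ξ ∈ H, ∃ τ ∈ H, ∃ v ∈ Hᗮ, S (ξ + v) = τ + v := by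
  intro ξ hξ
  set P := Hᗮ.starProjection
  set B := S.toLinearIsometry.compress Hᗮ
  have hfixed : ∀ w, B w = w → ⟪w, P (S ξ)⟫_ℂ = 0 := by
    intro w hw
    have hwL : w ∈ Hᗮ := hw ▸ S.toLinearIsometry.compress_apply_mem Hᗮ w
    have hSw : S w = w := S.toLinearIsometry.apply_eq_self_of_compress_apply_eq Hᗮ hw
    calc ⟪w, P (S ξ)⟫_ℂ = ⟪P w, S ξ⟫_ℂ := (Hᗮ.inner_starProjection_left_eq_right _ _).symm
      _ = ⟪S w, S ξ⟫_ℂ := by rw [Hᗮ.starProjection_eq_self_iff.2 hwL, hSw]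
      _ = ⟪w, ξ⟫_ℂ := S.inner_map_map _ _
      _ = 0 := inner_left_of_mem_orthogonal hξ hwL
  obtain ⟨v, hv⟩ := LinearMap.mem_range_one_sub_of_forall_fixed_inner_eq_zero
    (S.toLinearIsometry.norm_compress_apply_le Hᗮ) hfixed
  change v - B v = P (S ξ) at hv
  have hvL : v ∈ Hᗮ := by
    rw [eq_add_of_sub_eq hv]
    exact add_mem (Hᗮ.starProjection_apply_mem _) (S.toLinearIsometry.compress_apply_mem Hᗮ v)
  refine ⟨S (ξ + v) - v, ?_, v, hvL, (sub_add_cancel _ _).symm⟩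
  rw [← H.orthogonal_orthogonal, ← Hᗮ.starProjection_apply_eq_zero_iff, map_sub, map_add,
    map_add, ← hv, S.toLinearIsometry.compress_apply, Hᗮ.starProjection_eq_self_iff.2 hvL,
    LinearIsometryEquiv.coe_toLinearIsometry]
  abel
end

section
/- Let S be a unitary on H ⊕ L, Π the orthogonal projection onto L, and ξ ∈ H. If v, v' ∈ L both satisfy S(ξ ⊕ v) = τ ⊕ v and S(ξ ⊕ v') = τ' ⊕ v' for some τ, τ' ∈ H, and both v and v' are orthogonal to the 1-eigenspace of Π S Π restricted to L, then v = v' and τ = τ'. -/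
/-!
The difference `w = v - v'` of two catalysts satisfies `S w = (τ - τ') + w` with `τ - τ' ∈ H`, so
projecting onto `L = Hᗮ` gives `Π S Π w = w`: `w` lies in the `1`-eigenspace. Both `v` and `v'`
are orthogonal to it, hence so is `w` itself, forcing `w = 0`; then `τ = τ'` by cancellation.
-/

lemma map_sub_eq_of_map_add_eq_add {M F : Type*} [AddCommGroup M] [FunLike F M M]
    [AddMonoidHomClass F M M] (f : F) {x y y' z z' : M}
    (h : f (x + y) = z + y) (h' : f (x + y') = z' + y') :
    f (y - y') = (z - z') + (y - y') := by
  rw [← add_sub_add_left_eq_sub y y' x, map_sub, h, h']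
  abel

lemma eq_of_inner_sub_eq_zero {𝕜 E : Type*} [RCLike 𝕜] [NormedAddCommGroup E]
    [InnerProductSpace 𝕜 E] {v v' : E}
    (h : inner 𝕜 v (v - v') = 0) (h' : inner 𝕜 v' (v - v') = 0) : v = v' := by
  rw [← sub_eq_zero, ← inner_self_eq_zero (𝕜 := 𝕜), inner_sub_left, h, h', sub_zero]

theorem transduction_unique_general
    {W : Type*} [NormedAddCommGroup W] [InnerProductSpace ℂ W] [FiniteDimensional ℂ W]
    (H : Submodule ℂ W) (S : W ≃ₗᵢ[ℂ] W)
    {ξ τ τ' v v' : W}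
    (hτ : τ ∈ H) (hτ' : τ' ∈ H)
    (hv : v ∈ Hᗮ) (hv' : v' ∈ Hᗮ)
    (h1 : S (ξ + v) = τ + v) (h2 : S (ξ + v') = τ' + v')
    (horth : ∀ w ∈ Hᗮ, ((Hᗮ.orthogonalProjectionOnto (S w)) : W) = w → (inner ℂ v w : ℂ) = 0)
    (horth' : ∀ w ∈ Hᗮ, ((Hᗮ.orthogonalProjectionOnto (S w)) : W) = w → (inner ℂ v' w : ℂ) = 0) :
    v = v' ∧ τ = τ' := by
  have hw : v - v' ∈ Hᗮ := Hᗮ.sub_mem hv hv'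
  have hfixed : (Hᗮ.orthogonalProjectionOnto (S (v - v')) : W) = v - v' := by
    rw [Submodule.coe_orthogonalProjectionOnto_apply, map_sub_eq_of_map_add_eq_add S h1 h2]
    exact Hᗮ.eq_starProjection_of_mem_orthogonal' hw
      (H.le_orthogonal_orthogonal (H.sub_mem hτ hτ')) (add_comm _ _)
  obtain rfl : v = v' := eq_of_inner_sub_eq_zero (horth _ hw hfixed) (horth' _ hw hfixed)
  exact ⟨rfl, add_right_cancel (h1.symm.trans h2)⟩

/-- **Transduction (uniqueness).** Let `S` be a unitary on `W = H ⊕ L` with `L = Hᗮ`, and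
let `Π` be the orthogonal projection onto `L`. If `v, v' ∈ L` are catalysts for `ξ ∈ H`
(i.e. `S(ξ ⊕ v) = τ ⊕ v` and `S(ξ ⊕ v') = τ' ⊕ v'` with `τ, τ' ∈ H`), and both `v` and
`v'` are orthogonal to the `1`-eigenspace of `Π S Π` restricted to `L`, then `v = v'`
and `τ = τ'`. -/
theorem transduction_unique
    {W : Type*} [NormedAddCommGroup W] [InnerProductSpace ℂ W] [FiniteDimensional ℂ W]
    (H : Submodule ℂ W) (S : W ≃ₗᵢ[ℂ] W)
    {ξ τ τ' v v' : W}
    (hξ : ξ ∈ H) (hτ : τ ∈ H) (hτ' : τ' ∈ H)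
    (hv : v ∈ Hᗮ) (hv' : v' ∈ Hᗮ)
    (h1 : S (ξ + v) = τ + v) (h2 : S (ξ + v') = τ' + v')
    (horth : ∀ w ∈ Hᗮ, ((Hᗮ.orthogonalProjectionOnto (S w)) : W) = w → (inner ℂ v w : ℂ) = 0)
    (horth' : ∀ w ∈ Hᗮ, ((Hᗮ.orthogonalProjectionOnto (S w)) : W) = w → (inner ℂ v' w : ℂ) = 0) :
    v = v' ∧ τ = τ' :=
  transduction_unique_general H S hτ hτ' hv hv' h1 h2 horth horth'
end

section
/- Let S be a unitary on H ⊕ L. The transduction action of S on H, sending ξ to the unique τ ∈ H with S(ξ ⊕ v) = τ ⊕ v for some v ∈ L orthogonal to the 1-eigenspace of Π S Π, is a unitary map from H to H. -/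
/-!
Write `L = Hᗮ`, `Π` for the orthogonal projection onto `L`, and `B = 1 - Π S Π` on `L`.
Since `S` is isometric, `Π S w = w` forces `S w = w`, so `ker B` consists of vectors fixed by `S`;
such a `u` satisfies `⟪u, Π S x⟫ = ⟪u, x⟫`, which puts both `range B` and `Π S H` inside
`(ker B)ᗮ`. Hence `B` is invertible on `(ker B)ᗮ` and `v = B⁻¹ Π S ξ` is a linear solution of
`Π S (ξ + v) = v`. The action `ξ ↦ (1 - Π) S (ξ + v)` is then isometric by Pythagoras, and an
isometry of the finite-dimensional space `H` is unitary.
-/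

open Submodule LinearMap
open scoped InnerProductSpace

namespace Transduction

variable {𝕜 E : Type*} [RCLike 𝕜] [NormedAddCommGroup E] [InnerProductSpace 𝕜 E]

theorem _root_.LinearMap.bijective_restrict_orthogonal_ker {V : Type*} [NormedAddCommGroup V]
    [InnerProductSpace 𝕜 V] [FiniteDimensional 𝕜 V] (f : V →ₗ[𝕜] V)
    (hf : ∀ v, f v ∈ (ker f)ᗮ) :
    Function.Bijective (f.restrict (p := (ker f)ᗮ) fun v _ => hf v) := by
  have hinj : Function.Injective (f.restrict (p := (ker f)ᗮ) fun v _ => hf v) := by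
    rw [injective_iff_map_eq_zero]
    intro v hv
    have hker : (v : V) ∈ ker f := congrArg Subtype.val hv
    exact Subtype.ext (inner_self_eq_zero.mp (inner_right_of_mem_orthogonal hker v.2))
  exact ⟨hinj, injective_iff_surjective.mp hinj⟩

theorem norm_eq_of_map_add_eq_add (S : E →ₗᵢ[𝕜] E) {x y v : E} (hx : ⟪x, v⟫_𝕜 = 0)
    (hy : ⟪y, v⟫_𝕜 = 0) (h : S (x + v) = y + v) : ‖y‖ = ‖x‖ := by
  have hsq : ‖y‖ * ‖y‖ + ‖v‖ * ‖v‖ = ‖x‖ * ‖x‖ + ‖v‖ * ‖v‖ := by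
    rw [← norm_add_sq_eq_norm_sq_add_norm_sq_of_inner_eq_zero _ _ hx,
      ← norm_add_sq_eq_norm_sq_add_norm_sq_of_inner_eq_zero _ _ hy, ← h, S.norm_map]
  exact (mul_self_inj (norm_nonneg _) (norm_nonneg _)).mp (by linarith)

section Compression

variable (S : E →ₗᵢ[𝕜] E) (L : Submodule 𝕜 E) [L.HasOrthogonalProjection]

/-- The compression `Π S Π` of `S` to `L`. -/
noncomputable def compression : L →ₗ[𝕜] L :=
  L.orthogonalProjectionOnto.toLinearMap ∘ₗ S.toLinearMap ∘ₗ L.subtype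

theorem compression_apply (w : L) : compression S L w = L.orthogonalProjectionOnto (S w) := rfl

noncomputable def defect : L →ₗ[𝕜] L := LinearMap.id - compression S L

theorem defect_apply (w : L) : defect S L w = w - compression S L w := rfl

theorem compression_apply_eq_self_iff (w : L) : compression S L w = w ↔ S w = w := by
  constructor
  · intro h
    have hw : L.starProjection (S w) = w := congrArg Subtype.val h
    have hmem : S w ∈ L := by
      rw [mem_iff_norm_starProjection, hw, S.norm_map]
    calc S w = L.starProjection (S w) := (starProjection_eq_self_iff.mpr hmem).symm
      _ = w := hw
  · intro h
    rw [compression_apply, h, orthogonalProjectionOnto_mem_subspace_eq_self]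

theorem mem_ker_defect_iff (w : L) : w ∈ ker (defect S L) ↔ S w = w := by
  rw [mem_ker, defect_apply, sub_eq_zero, eq_comm, compression_apply_eq_self_iff]

theorem inner_orthogonalProjectionOnto_map_of_mem_ker_defect {u : L} (hu : u ∈ ker (defect S L))
    (x : E) :
    ⟪u, L.orthogonalProjectionOnto (S x)⟫_𝕜 = ⟪(u : E), x⟫_𝕜 := by
  calc ⟪u, L.orthogonalProjectionOnto (S x)⟫_𝕜 = ⟪S u, S x⟫_𝕜 := by
        rw [inner_orthogonalProjectionOnto_eq_of_mem_left, (mem_ker_defect_iff S L u).mp hu]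
    _ = ⟪(u : E), x⟫_𝕜 := S.inner_map_map _ _

theorem defect_mem_orthogonal_ker (w : L) : defect S L w ∈ (ker (defect S L))ᗮ := by
  intro u hu
  rw [defect_apply, inner_sub_right, compression_apply,
    inner_orthogonalProjectionOnto_map_of_mem_ker_defect S L hu, coe_inner, sub_self]

theorem orthogonalProjectionOnto_map_mem_orthogonal_ker {ξ : E} (hξ : ξ ∈ Lᗮ) :
    L.orthogonalProjectionOnto (S ξ) ∈ (ker (defect S L))ᗮ := by
  intro u hu
  rw [inner_orthogonalProjectionOnto_map_of_mem_ker_defect S L hu]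
  exact inner_right_of_mem_orthogonal u.2 hξ

end Compression

section Action

variable [FiniteDimensional 𝕜 E] (H : Submodule 𝕜 E) (S : E →ₗᵢ[𝕜] E)

noncomputable def defectEquiv : (ker (defect S Hᗮ))ᗮ ≃ₗ[𝕜] (ker (defect S Hᗮ))ᗮ :=
  LinearEquiv.ofBijective _
    ((defect S Hᗮ).bijective_restrict_orthogonal_ker (defect_mem_orthogonal_ker S Hᗮ))

noncomputable def coupling : H →ₗ[𝕜] (ker (defect S Hᗮ))ᗮ :=
  codRestrict _ (Hᗮ.orthogonalProjectionOnto.toLinearMap ∘ₗ S.toLinearMap ∘ₗ H.subtype)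
    fun ξ => orthogonalProjectionOnto_map_mem_orthogonal_ker S Hᗮ (le_orthogonal_orthogonal H ξ.2)

/-- The paper's `v`: the solution of `Π S (ξ + v) = v` orthogonal to `ker (1 - Π S Π)`. -/
noncomputable def memory : H →ₗ[𝕜] Hᗮ :=
  (ker (defect S Hᗮ))ᗮ.subtype ∘ₗ (defectEquiv H S).symm.toLinearMap ∘ₗ coupling H S

theorem memory_mem_orthogonal_ker (ξ : H) : memory H S ξ ∈ (ker (defect S Hᗮ))ᗮ :=
  ((defectEquiv H S).symm _).2

theorem defect_memory (ξ : H) :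
    defect S Hᗮ (memory H S ξ) = Hᗮ.orthogonalProjectionOnto (S ξ) := by
  exact congrArg Subtype.val ((defectEquiv H S).apply_symm_apply (coupling H S ξ))

theorem orthogonalProjectionOnto_map_add_memory (ξ : H) :
    Hᗮ.orthogonalProjectionOnto (S (ξ + memory H S ξ)) = memory H S ξ := by
  rw [map_add, map_add, ← defect_memory, defect_apply, compression_apply, sub_add_cancel]

noncomputable def action : H →ₗ[𝕜] H :=
  H.orthogonalProjectionOnto.toLinearMap ∘ₗ S.toLinearMap ∘ₗ
    (H.subtype + Hᗮ.subtype ∘ₗ memory H S)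

theorem map_add_memory (ξ : H) :
    S (ξ + memory H S ξ) = action H S ξ + memory H S ξ := by
  conv_lhs => rw [← H.starProjection_add_starProjection_orthogonal (S _)]
  rw [starProjection_apply, starProjection_apply, orthogonalProjectionOnto_map_add_memory]
  rfl

theorem norm_action (ξ : H) : ‖action H S ξ‖ = ‖ξ‖ :=
  norm_eq_of_map_add_eq_add S (inner_right_of_mem_orthogonal ξ.2 (memory H S ξ).2)
    (inner_right_of_mem_orthogonal (action H S ξ).2 (memory H S ξ).2) (map_add_memory H S ξ)

noncomputable def actionEquiv : H ≃ₗᵢ[𝕜] H :=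
  let T : H →ₗᵢ[𝕜] H := ⟨action H S, norm_action H S⟩
  LinearIsometryEquiv.ofSurjective T (injective_iff_surjective.mp T.injective)

end Action

end Transduction

open Transduction in
/-- **The transduction action is unitary.** Let `S` be a unitary on `W = H ⊕ L` with
`L = Hᗮ`. The transduction action of `S` on `H`, sending `ξ` to the unique `τ ∈ H` with
`S(ξ ⊕ v) = τ ⊕ v` for some `v ∈ L` orthogonal to the `1`-eigenspace of `Π S Π`, is a
unitary map from `H` to `H`. -/
theorem transduction_action_unitary
    {W : Type*} [NormedAddCommGroup W] [InnerProductSpace ℂ W] [FiniteDimensional ℂ W]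
    (H : Submodule ℂ W) (S : W ≃ₗᵢ[ℂ] W) :
    ∃ T : H ≃ₗᵢ[ℂ] H, ∀ ξ : H, ∃ v ∈ Hᗮ,
      (∀ w ∈ Hᗮ, ((Hᗮ.orthogonalProjectionOnto (S w)) : W) = w → (inner ℂ v w : ℂ) = 0) ∧
      S ((ξ : W) + v) = (T ξ : W) + v := by
  let S' := S.toLinearIsometry
  refine ⟨actionEquiv H S', fun ξ => ⟨memory H S' ξ, (memory H S' ξ).2, ?_, map_add_memory H S' ξ⟩⟩
  intro w hw hfix
  have hker : (⟨w, hw⟩ : Hᗮ) ∈ ker (defect S' Hᗮ) := by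
    rw [mem_ker, defect_apply, sub_eq_zero]
    exact Subtype.ext hfix.symm
  have horth := inner_left_of_mem_orthogonal hker (memory_mem_orthogonal_ker H S' ξ)
  exact horth
end

section
/- Let S be a unitary on H ⊕ L and Π the orthogonal projection onto L. For ξ ∈ H, the vector v = (Π − Π S Π)⁺ Π S ξ (pseudoinverse) lies in the orthogonal complement in L of the 1-eigenspace of Π S Π, and satisfies Π S(ξ ⊕ v) = Π v, i.e., S(ξ ⊕ v) = τ ⊕ v for τ = (I − Π) S (ξ ⊕ v) ∈ H. -/
open LinearMap

/-- The orthogonal projection onto a (finite-dimensional) subspace `L`, as an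
endomorphism of the ambient space. -/
noncomputable def projOnto {W : Type*} [NormedAddCommGroup W] [InnerProductSpace ℂ W]
    [FiniteDimensional ℂ W] (L : Submodule ℂ W) : W →ₗ[ℂ] W :=
  L.subtype ∘ₗ (Submodule.orthogonalProjectionOnto L).toLinearMap

/-- The Moore–Penrose pseudoinverse of `A` applied to `b`: the unique vector `x`
orthogonal to `ker A` with `A x` equal to the orthogonal projection of `b` onto the
range of `A`. -/
noncomputable def pinvApply {W : Type*} [NormedAddCommGroup W] [InnerProductSpace ℂ W]
    [FiniteDimensional ℂ W] (A : W →ₗ[ℂ] W) (b : W) : W :=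
  Classical.epsilon fun x =>
    x ∈ (LinearMap.ker A)ᗮ ∧ A x = (Submodule.orthogonalProjectionOnto (LinearMap.range A) b : W)

/-!
With `A = Π − Π S Π`, the vector `v = A⁺ Π S ξ` lies in `(ker A)ᗮ ⊆ Hᗮ`, since `A` kills `H`.
The point is that `Π S ξ` lies in the range of `A`, so that `A v = Π S ξ`, which is exactly
`Π S (ξ + v) = v`: a vector orthogonal to that range is killed by `A* = Π − Π S⁻¹ Π`, and for an
isometry `Π S⁻¹ Π z = Π z` forces `S⁻¹ Π z = Π z`, a vector of `Hᗮ` orthogonal to `S ξ`.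
-/

section LinearIsometry

open Submodule

variable {𝕜 E : Type*} [RCLike 𝕜] [NormedAddCommGroup E] [InnerProductSpace 𝕜 E]

/-- Projecting onto `K` preserves the norm of `S x` only if `S x ∈ K`. -/
theorem LinearIsometry.apply_eq_self_of_starProjection_apply_eq (S : E →ₗᵢ[𝕜] E)
    (K : Submodule 𝕜 E) [K.HasOrthogonalProjection] {x : E} (h : K.starProjection (S x) = x) :
    S x = x :=
  have hSx : S x ∈ K := (K.mem_iff_norm_starProjection _).mpr (by rw [h, S.norm_map])
  (starProjection_eq_self_iff.mpr hSx).symm.trans h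

end LinearIsometry

section Pseudoinverse

open Submodule

variable {W : Type*} [NormedAddCommGroup W] [InnerProductSpace ℂ W] [FiniteDimensional ℂ W]

theorem pinvApply_spec (A : W →ₗ[ℂ] W) (b : W) :
    pinvApply A b ∈ (ker A)ᗮ ∧ A (pinvApply A b) = (range A).starProjection b := by
  refine Classical.epsilon_spec (p := fun x => x ∈ (ker A)ᗮ ∧
    A x = ((range A).orthogonalProjectionOnto b : W)) ?_
  obtain ⟨x₀, hx₀⟩ := ((range A).orthogonalProjectionOnto b).2
  refine ⟨(ker A)ᗮ.starProjection x₀, starProjection_apply_mem _ _, ?_⟩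
  have hker : x₀ - (ker A)ᗮ.starProjection x₀ ∈ ker A := by
    simpa only [orthogonal_orthogonal] using sub_starProjection_mem_orthogonal (K := (ker A)ᗮ) x₀
  rw [← hx₀, eq_comm, ← sub_eq_zero, ← map_sub]
  exact hker

theorem apply_pinvApply_of_mem_range {A : W →ₗ[ℂ] W} {b : W} (hb : b ∈ range A) :
    A (pinvApply A b) = b :=
  (pinvApply_spec A b).2.trans (starProjection_eq_self_iff.mpr hb)

noncomputable def oneSubCompression (K : Submodule ℂ W) (S : W ≃ₗᵢ[ℂ] W) : W →ₗ[ℂ] W :=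
  projOnto K - projOnto K ∘ₗ S.toLinearEquiv.toLinearMap ∘ₗ projOnto K

namespace oneSubCompression

variable (K : Submodule ℂ W) (S : W ≃ₗᵢ[ℂ] W)

theorem apply (x : W) :
    oneSubCompression K S x = K.starProjection x - K.starProjection (S (K.starProjection x)) :=
  rfl

variable {K} in
theorem apply_of_mem {x : W} (hx : x ∈ K) :
    oneSubCompression K S x = x - K.starProjection (S x) := by
  rw [apply, starProjection_eq_self_iff.mpr hx]

theorem orthogonal_le_ker : Kᗮ ≤ ker (oneSubCompression K S) := fun x hx => by
  rw [mem_ker, apply, (K.starProjection_apply_eq_zero_iff).mpr hx, map_zero, map_zero, sub_zero]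

theorem inner_apply_eq_inner_apply_symm (y z : W) :
    inner ℂ (oneSubCompression K S y) z = inner ℂ y (oneSubCompression K S.symm z) := by
  simp only [apply, inner_sub_left, inner_sub_right, LinearIsometryEquiv.inner_map_eq_flip,
    inner_starProjection_left_eq_right]

theorem starProjection_apply_mem_range {ξ : W} (hξ : ξ ∈ Kᗮ) :
    K.starProjection (S ξ) ∈ range (oneSubCompression K S) := by
  rw [← (range _).orthogonal_orthogonal]
  intro z hz
  have hker : oneSubCompression K S.symm z = 0 := ext_inner_left ℂ fun y => by
    rw [← inner_apply_eq_inner_apply_symm, inner_zero_right]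
    exact hz _ (mem_range_self _ y)
  have hfix : S.symm (K.starProjection z) = K.starProjection z := by
    refine S.symm.toLinearIsometry.apply_eq_self_of_starProjection_apply_eq K ?_
    rw [apply, sub_eq_zero] at hker
    exact hker.symm
  calc inner ℂ z (K.starProjection (S ξ))
      = inner ℂ (S.symm (K.starProjection z)) ξ := by
        rw [← inner_starProjection_left_eq_right, LinearIsometryEquiv.inner_map_eq_flip,
          LinearIsometryEquiv.symm_symm]
    _ = 0 := by rw [hfix]; exact hξ _ (starProjection_apply_mem _ _)

end oneSubCompression

end Pseudoinverse

/-- Let `S` be a unitary on `W = H ⊕ L` (`L = Hᗮ`) and `Π` the orthogonal projection onto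
`L`. For `ξ ∈ H`, the vector `v = (Π − Π S Π)⁺ Π S ξ` lies in `L`, in the orthogonal
complement of the `1`-eigenspace of `Π S Π`, and satisfies `Π S (ξ + v) = v`, i.e.
`S (ξ + v) = τ + v` with `τ = (I − Π) S (ξ + v) ∈ H`. -/
theorem transduction_catalyst_pinv
    {W : Type*} [NormedAddCommGroup W] [InnerProductSpace ℂ W] [FiniteDimensional ℂ W]
    (H : Submodule ℂ W) (S : W ≃ₗᵢ[ℂ] W)
    (ξ : W) (hξ : ξ ∈ H)
    (v : W)
    (hvdef : v = pinvApply
        (projOnto Hᗮ - (projOnto Hᗮ ∘ₗ S.toLinearEquiv.toLinearMap ∘ₗ projOnto Hᗮ))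
        (projOnto Hᗮ (S ξ))) :
    v ∈ Hᗮ ∧
    (∀ w ∈ Hᗮ, ((Submodule.orthogonalProjectionOnto Hᗮ (S w)) : W) = w → (inner ℂ v w : ℂ) = 0) ∧
    ((Submodule.orthogonalProjectionOnto Hᗮ (S (ξ + v))) : W) = v ∧
    S (ξ + v) - v ∈ H := by
  have hv_ker : v ∈ (ker (oneSubCompression Hᗮ S))ᗮ := by
    rw [hvdef]; exact (pinvApply_spec _ _).1
  have hAv : oneSubCompression Hᗮ S v = Hᗮ.starProjection (S ξ) := by
    rw [hvdef]
    exact apply_pinvApply_of_mem_range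
      (oneSubCompression.starProjection_apply_mem_range _ S (H.le_orthogonal_orthogonal hξ))
  have hvL : v ∈ Hᗮ := Submodule.orthogonal_le
    (H.le_orthogonal_orthogonal.trans (oneSubCompression.orthogonal_le_ker _ S)) hv_ker
  have hfix : Hᗮ.starProjection (S (ξ + v)) = v := by
    rw [oneSubCompression.apply_of_mem S hvL] at hAv
    rw [map_add, map_add, ← hAv, sub_add_cancel]
  refine ⟨hvL, fun w hw hSw => ?_, hfix, ?_⟩
  · refine (Submodule.mem_orthogonal' _ _).mp hv_ker w ?_
    rw [mem_ker, oneSubCompression.apply_of_mem S hw, Submodule.starProjection_apply, hSw,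
      sub_self]
  · simpa only [hfix, Submodule.orthogonal_orthogonal] using
      Submodule.sub_starProjection_mem_orthogonal (K := Hᗮ) (S (ξ + v))
end

section
/- Electric quantum walk, non-marked case: let G be a bipartite graph with parts A, B, edge weights w_e > 0, extended by dangling edges u'u for u in the support of σ with weight σ_u. Let ψ_u = Σ_{e ∼ u} √w_e |e⟩ and let R_A (resp. R_B) be the product of reflections about ψ_u for u ∈ A (resp. u ∈ B). Then the vector Σ_{e ∈ E ∪ E'} √w_e |e⟩ is negated by R_A and has its E-part preserved by R_B in such a way that R_B R_A maps ξ ⊕ v to −ξ ⊕ v, where ξ = Σ_{u} √σ_u |u'u⟩ and v = Σ_{e ∈ E} √w_e |e⟩; hence the walk transduces ξ into −ξ with transduction complexity Σ_{e∈E} w_e. -/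
/-!
Every edge of `E` has exactly one endpoint in `A` and one in `B`, and every dangling edge one
endpoint in `A`, so `∑_{u ∈ A} ψ_u = v + ξ` and `∑_{u ∈ B} ψ_u = v`. Hence `R_A` negates `ξ + v`
and `R_B` negates `v`, while `R_B` fixes `ξ`, which is supported on the dangling edges and is
therefore orthogonal to every `ψ_u` with `u ∈ B`.
-/

theorem sum_sum_ite_eq_sum {ι κ M : Type*} [Fintype ι] [Fintype κ] [DecidableEq κ]
    [AddCommMonoid M] (f : ι → κ) (x : ι → M) :
    ∑ u, ∑ i, (if f i = u then x i else 0) = ∑ i, x i := by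
  rw [Finset.sum_comm]
  simp only [Finset.sum_ite_eq, Finset.mem_univ, if_true]

theorem map_sum_eq_neg_sum {ι M F : Type*} [AddCommGroup M] [FunLike F M M]
    [AddMonoidHomClass F M M] {f : F} {x : ι → M} (s : Finset ι) (hf : ∀ i, f (x i) = -x i) :
    f (∑ i ∈ s, x i) = -∑ i ∈ s, x i := by
  simp [map_sum, hf]

theorem EuclideanSpace.inner_eq_zero_of_apply_inr_of_apply_inl {𝕜 ι κ : Type*} [RCLike 𝕜]
    [Fintype ι] [Fintype κ] {x y : EuclideanSpace 𝕜 (ι ⊕ κ)}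
    (hx : ∀ j, x (.inr j) = 0) (hy : ∀ i, y (.inl i) = 0) :
    inner 𝕜 x y = 0 := by
  simp [PiLp.inner_apply, Fintype.sum_sum_type, hx, hy]

theorem EuclideanSpace.norm_sq_sum_sqrt_smul_single {ι κ : Type*} [Fintype ι] [Fintype κ]
    [DecidableEq κ] {g : ι → κ} (hg : Function.Injective g) {c : ι → ℝ} (hc : ∀ i, 0 ≤ c i) :
    ‖∑ i, (Real.sqrt (c i) : ℂ) • EuclideanSpace.single (g i) (1 : ℂ)‖ ^ 2 = ∑ i, c i := by
  have hv : Orthonormal ℂ fun i => EuclideanSpace.single (g i) (1 : ℂ) :=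
    EuclideanSpace.orthonormal_single.comp g hg
  rw [@norm_sq_eq_re_inner ℂ, hv.inner_sum]
  simp [← Complex.ofReal_mul, Real.mul_self_sqrt (hc _)]

theorem electric_walk_unmarked_general
    {E E' A B : Type*} [Fintype E] [Fintype E'] [Fintype A] [Fintype B]
    [DecidableEq E] [DecidableEq E'] [DecidableEq A] [DecidableEq B]
    (endA : E → A) (endB : E → B) (endD : E' → A)
    (w : E ⊕ E' → ℝ) (hw : ∀ e, 0 < w e)
    (ψA : A → EuclideanSpace ℂ (E ⊕ E')) (ψB : B → EuclideanSpace ℂ (E ⊕ E'))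
    (hψA : ∀ u : A, ψA u =
        (∑ e : E, if endA e = u then
            (Real.sqrt (w (Sum.inl e)) : ℂ) • EuclideanSpace.single (Sum.inl e) (1 : ℂ)
          else 0)
        + ∑ e' : E', if endD e' = u then
            (Real.sqrt (w (Sum.inr e')) : ℂ) • EuclideanSpace.single (Sum.inr e') (1 : ℂ)
          else 0)
    (hψB : ∀ u : B, ψB u =
        ∑ e : E, if endB e = u then
            (Real.sqrt (w (Sum.inl e)) : ℂ) • EuclideanSpace.single (Sum.inl e) (1 : ℂ)
          else 0)
    (RA RB : EuclideanSpace ℂ (E ⊕ E') ≃ₗᵢ[ℂ] EuclideanSpace ℂ (E ⊕ E'))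
    (hRA1 : ∀ u : A, RA (ψA u) = -ψA u)
    (hRB1 : ∀ u : B, RB (ψB u) = -ψB u)
    (hRB2 : ∀ x : EuclideanSpace ℂ (E ⊕ E'),
        (∀ u : B, (inner ℂ (ψB u) x : ℂ) = 0) → RB x = x)
    (ξ v : EuclideanSpace ℂ (E ⊕ E'))
    (hξ : ξ = ∑ e' : E',
        (Real.sqrt (w (Sum.inr e')) : ℂ) • EuclideanSpace.single (Sum.inr e') (1 : ℂ))
    (hv : v = ∑ e : E,
        (Real.sqrt (w (Sum.inl e)) : ℂ) • EuclideanSpace.single (Sum.inl e) (1 : ℂ)) :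
    RB (RA (ξ + v)) = -ξ + v ∧ ‖v‖ ^ 2 = ∑ e : E, w (Sum.inl e) := by
  have hψA_sum : ∑ u, ψA u = v + ξ := by
    simp only [hψA, Finset.sum_add_distrib, sum_sum_ite_eq_sum, hv, hξ]
  have hψB_sum : ∑ u, ψB u = v := by
    simp only [hψB, sum_sum_ite_eq_sum, hv]
  have hRA_ξv : RA (ξ + v) = -(ξ + v) := by
    rw [add_comm, ← hψA_sum]
    exact map_sum_eq_neg_sum _ hRA1
  have hRB_v : RB v = -v := by
    rw [← hψB_sum]
    exact map_sum_eq_neg_sum _ hRB1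
  have hRB_ξ : RB ξ = ξ := hRB2 ξ fun u =>
    EuclideanSpace.inner_eq_zero_of_apply_inr_of_apply_inl
      (by simp [hψB, apply_ite WithLp.ofLp, ite_apply]) (by simp [hξ])
  constructor
  · rw [hRA_ξv, map_neg, map_add, hRB_ξ, hRB_v]
    abel
  · rw [hv]
    exact EuclideanSpace.norm_sq_sum_sqrt_smul_single Sum.inl_injective fun e => (hw _).le

/-- **Electric quantum walk, non-marked case.** Let `G` be a finite bipartite graph with
parts `A, B`, edge set `E` (each `e ∈ E` having endpoints `endA e ∈ A`, `endB e ∈ B`),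
extended by dangling edges `E'` incident to `A` (endpoint map `endD`, injective), with
positive weights `w` where the dangling weights are `σ` (summing to 1). With
`ψ_u = Σ_{e ∼ u} √w_e |e⟩`, let `R_A` (resp. `R_B`) be the reflection acting as `−1` on
the span of `{ψ_u : u ∈ A}` (resp. `{ψ_u : u ∈ B}`) and `+1` on its orthogonal
complement. Then `R_B R_A` maps `ξ ⊕ v` to `−ξ ⊕ v`, where
`ξ = Σ_{u} √σ_u |u'u⟩` and `v = Σ_{e ∈ E} √w_e |e⟩`; hence the walk transduces `ξ`
into `−ξ` with transduction complexity `‖v‖² = Σ_{e ∈ E} w_e`. -/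
theorem electric_walk_unmarked
    {E E' A B : Type*} [Fintype E] [Fintype E'] [Fintype A] [Fintype B]
    [DecidableEq E] [DecidableEq E'] [DecidableEq A] [DecidableEq B]
    (endA : E → A) (endB : E → B) (endD : E' → A) (hendD : Function.Injective endD)
    (w : E ⊕ E' → ℝ) (hw : ∀ e, 0 < w e)
    (hσ : ∑ e' : E', w (Sum.inr e') = 1)
    (ψA : A → EuclideanSpace ℂ (E ⊕ E')) (ψB : B → EuclideanSpace ℂ (E ⊕ E'))
    (hψA : ∀ u : A, ψA u =
        (∑ e : E, if endA e = u then
            (Real.sqrt (w (Sum.inl e)) : ℂ) • EuclideanSpace.single (Sum.inl e) (1 : ℂ)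
          else 0)
        + ∑ e' : E', if endD e' = u then
            (Real.sqrt (w (Sum.inr e')) : ℂ) • EuclideanSpace.single (Sum.inr e') (1 : ℂ)
          else 0)
    (hψB : ∀ u : B, ψB u =
        ∑ e : E, if endB e = u then
            (Real.sqrt (w (Sum.inl e)) : ℂ) • EuclideanSpace.single (Sum.inl e) (1 : ℂ)
          else 0)
    (RA RB : EuclideanSpace ℂ (E ⊕ E') ≃ₗᵢ[ℂ] EuclideanSpace ℂ (E ⊕ E'))
    (hRA1 : ∀ u : A, RA (ψA u) = -ψA u)
    (hRA2 : ∀ x : EuclideanSpace ℂ (E ⊕ E'),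
        (∀ u : A, (inner ℂ (ψA u) x : ℂ) = 0) → RA x = x)
    (hRB1 : ∀ u : B, RB (ψB u) = -ψB u)
    (hRB2 : ∀ x : EuclideanSpace ℂ (E ⊕ E'),
        (∀ u : B, (inner ℂ (ψB u) x : ℂ) = 0) → RB x = x)
    (ξ v : EuclideanSpace ℂ (E ⊕ E'))
    (hξ : ξ = ∑ e' : E',
        (Real.sqrt (w (Sum.inr e')) : ℂ) • EuclideanSpace.single (Sum.inr e') (1 : ℂ))
    (hv : v = ∑ e : E,
        (Real.sqrt (w (Sum.inl e)) : ℂ) • EuclideanSpace.single (Sum.inl e) (1 : ℂ)) :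
    RB (RA (ξ + v)) = -ξ + v ∧ ‖v‖ ^ 2 = ∑ e : E, w (Sum.inl e) :=
  electric_walk_unmarked_general endA endB endD w hw ψA ψB hψA hψB RA RB hRA1 hRB1 hRB2 ξ v hξ hv
end

section
/- Purifier amplitude bound: let 0 ≤ c−d < c+d ≤ 1, set a = ((1−c+d)/(1−c−d))^{1/4} and b = ((c+d)/(c−d))^{1/4}, and μ = √((1−c)²−d²) + √(c²−d²). For a unit vector ψ = ψ₀ ⊕ ψ₁ with ‖ψ₁‖² ≤ c−d, define ψ̃ = (1/a)ψ₀ ⊕ bψ₁; then ‖ψ̃‖² ≤ μ < 1. Similarly if ‖ψ₁‖² ≥ c+d and ψ̃ = aψ₀ ⊕ (1/b)ψ₁, then ‖ψ̃‖² ≤ μ. -/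
set_option maxHeartbeats 2000000 in
/-- **Purifier amplitude bound.** Let `0 < c − d`, `c + d < 1`, `d > 0`; set
`a = ((1−c+d)/(1−c−d))^{1/4}`, `b = ((c+d)/(c−d))^{1/4}` and
`μ = √((1−c)²−d²) + √(c²−d²)`. Then `μ < 1`, and for a unit vector `ψ = ψ₀ ⊕ ψ₁`
(`‖ψ₀‖² + ‖ψ₁‖² = 1`): if `‖ψ₁‖² ≤ c−d` and `ψ̃ = (1/a)ψ₀ ⊕ bψ₁`, then `‖ψ̃‖² ≤ μ`;
and if `‖ψ₁‖² ≥ c+d` and `ψ̃ = aψ₀ ⊕ (1/b)ψ₁`, then `‖ψ̃‖² ≤ μ`. -/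
theorem purifier_amplitude_bound
    {V₀ V₁ : Type*} [NormedAddCommGroup V₀] [InnerProductSpace ℂ V₀]
    [NormedAddCommGroup V₁] [InnerProductSpace ℂ V₁]
    (c d : ℝ) (hd : 0 < d) (hcd : 0 < c - d) (hcd' : c + d < 1)
    (ψ₀ : V₀) (ψ₁ : V₁) (hunit : ‖ψ₀‖ ^ 2 + ‖ψ₁‖ ^ 2 = 1)
    (a b μ : ℝ)
    (ha : a = ((1 - c + d) / (1 - c - d)) ^ ((1 : ℝ) / 4))
    (hb : b = ((c + d) / (c - d)) ^ ((1 : ℝ) / 4))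
    (hμ : μ = Real.sqrt ((1 - c) ^ 2 - d ^ 2) + Real.sqrt (c ^ 2 - d ^ 2)) :
    μ < 1 ∧
    (‖ψ₁‖ ^ 2 ≤ c - d → ‖(1 / a) • ψ₀‖ ^ 2 + ‖b • ψ₁‖ ^ 2 ≤ μ) ∧
    (c + d ≤ ‖ψ₁‖ ^ 2 → ‖a • ψ₀‖ ^ 2 + ‖(1 / b) • ψ₁‖ ^ 2 ≤ μ) := by
  have hp0 : (0:ℝ) < 1 - c - d := by linarith
  have hq0 : (0:ℝ) < 1 - c + d := by linarith
  have hr0 : (0:ℝ) < c - d := hcd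
  have hs0 : (0:ℝ) < c + d := by linarith
  set p := Real.sqrt (1 - c - d) with hp
  set q := Real.sqrt (1 - c + d) with hq
  set r := Real.sqrt (c - d) with hr
  set s := Real.sqrt (c + d) with hs
  have hpp : 0 < p := Real.sqrt_pos.2 hp0
  have hqp : 0 < q := Real.sqrt_pos.2 hq0
  have hrp : 0 < r := Real.sqrt_pos.2 hr0
  have hsp : 0 < s := Real.sqrt_pos.2 hs0
  have hp2 : p ^ 2 = 1 - c - d := Real.sq_sqrt hp0.le
  have hq2 : q ^ 2 = 1 - c + d := Real.sq_sqrt hq0.le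
  have hr2 : r ^ 2 = c - d := Real.sq_sqrt hr0.le
  have hs2 : s ^ 2 = c + d := Real.sq_sqrt hs0.le
  have hsq4 : ∀ x : ℝ, 0 ≤ x → (x ^ ((1:ℝ)/4)) ^ 2 = Real.sqrt x := by
    intro x hx
    rw [← Real.rpow_natCast (x ^ ((1:ℝ)/4)) 2, ← Real.rpow_mul hx, Real.sqrt_eq_rpow]
    norm_num
  have ha2 : a ^ 2 = q / p := by
    rw [ha, hsq4 _ (by positivity), Real.sqrt_div hq0.le]
  have hb2 : b ^ 2 = s / r := by
    rw [hb, hsq4 _ (by positivity), Real.sqrt_div hs0.le]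
  have hap : 0 < a := ha ▸ Real.rpow_pos_of_pos (by positivity) _
  have hbp : 0 < b := hb ▸ Real.rpow_pos_of_pos (by positivity) _
  have hμ' : μ = p * q + r * s := by
    rw [hμ, hp, hq, hr, hs, ← Real.sqrt_mul hp0.le, ← Real.sqrt_mul hr0.le]
    ring_nf
  have hpq : p ≤ q := Real.sqrt_le_sqrt (by linarith)
  have hrs : r ≤ s := Real.sqrt_le_sqrt (by linarith)
  have hψ0 : (0:ℝ) ≤ ‖ψ₀‖ ^ 2 := by positivity
  set t := ‖ψ₁‖ ^ 2 with ht
  have ht0 : 0 ≤ t := by positivity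
  refine ⟨?_, ?_, ?_⟩
  · -- μ < 1
    have h1 : p * q < 1 - c := by
      rw [hp, hq, ← Real.sqrt_mul hp0.le]
      calc Real.sqrt ((1 - c - d) * (1 - c + d)) < Real.sqrt ((1 - c) ^ 2) :=
            Real.sqrt_lt_sqrt (mul_nonneg hp0.le hq0.le)
              (by have h : (1-c)^2 - (1-c-d)*(1-c+d) = d^2 := by ring
                  have h2 : 0 < d^2 := by positivity
                  linarith)
        _ = 1 - c := Real.sqrt_sq (by linarith)
    have h2 : r * s < c := by
      rw [hr, hs, ← Real.sqrt_mul hr0.le]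
      calc Real.sqrt ((c - d) * (c + d)) < Real.sqrt (c ^ 2) :=
            Real.sqrt_lt_sqrt (mul_nonneg hr0.le hs0.le)
              (by have h : c^2 - (c-d)*(c+d) = d^2 := by ring
                  have h2 : 0 < d^2 := by positivity
                  linarith)
        _ = c := Real.sqrt_sq (by linarith)
    rw [hμ']; linarith
  · intro hle
    have hn0 : ‖(1/a) • ψ₀‖ ^ 2 = (1/a)^2 * ‖ψ₀‖^2 := by
      rw [norm_smul]; simp [abs_of_pos hap, mul_pow]
    have hn1 : ‖b • ψ₁‖ ^ 2 = b^2 * t := by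
      rw [norm_smul]; simp [abs_of_pos hbp, mul_pow, ht]
    have hia : (1/a)^2 = p / q := by
      rw [div_pow, ha2]; field_simp
    have hψ0' : ‖ψ₀‖ ^ 2 = 1 - t := by linarith
    rw [hn0, hn1, hia, hb2, hμ', hψ0']
    rw [div_mul_eq_mul_div, div_mul_eq_mul_div,
      div_add_div _ _ (ne_of_gt hqp) (ne_of_gt hrp), div_le_iff₀ (by positivity)]
    have hprod : (0:ℝ) ≤ (r^2 - t) * (s*q - p*r) :=
      mul_nonneg (by linarith [hr2 ▸ hle]) (by have h := mul_le_mul hpq hrs hrp.le hqp.le; linarith)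
    have hiden : (p*q + r*s) * (q*r) - (p*(1-t)*r + s*t*q)
        = (r^2 - t) * (s*q - p*r) + p*r*(q^2 + r^2 - 1) := by ring
    have hzero : q^2 + r^2 - 1 = 0 := by rw [hq2, hr2]; ring
    rw [hzero, mul_zero, add_zero] at hiden
    linarith
  · intro hge
    have hn0 : ‖a • ψ₀‖ ^ 2 = a^2 * ‖ψ₀‖^2 := by
      rw [norm_smul]; simp [abs_of_pos hap, mul_pow]
    have hn1 : ‖(1/b) • ψ₁‖ ^ 2 = (1/b)^2 * t := by
      rw [norm_smul]; simp [abs_of_pos hbp, mul_pow, ht]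
    have hib : (1/b)^2 = r / s := by
      rw [div_pow, hb2]; field_simp
    have hψ0' : ‖ψ₀‖ ^ 2 = 1 - t := by linarith
    rw [hn0, hn1, hib, ha2, hμ', hψ0']
    rw [div_mul_eq_mul_div, div_mul_eq_mul_div,
      div_add_div _ _ (ne_of_gt hpp) (ne_of_gt hsp), div_le_iff₀ (by positivity)]
    have hprod : (0:ℝ) ≤ (t - s^2) * (s*q - p*r) :=
      mul_nonneg (by linarith [hs2 ▸ hge]) (by have h := mul_le_mul hpq hrs hrp.le hqp.le; linarith)
    have hiden : (p*q + r*s) * (p*s) - (q*(1-t)*s + r*t*p)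
        = (t - s^2) * (s*q - p*r) + q*s*(p^2 + s^2 - 1) := by ring
    have hzero : p^2 + s^2 - 1 = 0 := by rw [hp2, hs2]; ring
    rw [hzero, mul_zero, add_zero] at hiden
    linarith
end
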